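/- Let v, w : ℝ^m → ℝ^m be continuously differentiable vector fields with vanishing Lie bracket, [v, w](x) = 0 for all x, let ψ be a global flow of w such that ψ(ε, ·) is continuously differentiable in the space variable for each ε, and let π : ℝ^m → ℝ^n be a differentiable map invariant under w, i.e., Dπ(x)(w(x)) = 0 for all x. Then the projected velocity is constant along the orbits of w: for all ε ∈ ℝ and x ∈ ℝ^m, Dπ(ψ(ε, x))(v(ψ(ε, x))) = Dπ(x)(v(x)). In particular, any G-invariant function for the symmetry group generated by w assigns the same projected dynamics to all points on a group orbit. -/

import Mathlib

/-!
Since `π` has derivative zero along `w`, it is constant on the orbits of `w`: `π ∘ ψ ε = π`.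
By the chain rule it then suffices that `ψ ε` maps `v` to itself, `Dψ_ε(x) v(x) = v(ψ_ε x)`.
The defect `k(s) = Dψ_s(x) v(x) - v(ψ_s x)` vanishes at `s = 0` and solves the linear ODE
`k' = Dw(ψ_s x) k`: the group law reduces the derivative of `s ↦ Dψ_s(x)` to its derivative
`Dw` at `s = 0`, and `[v, w] = 0` turns the derivative `Dv(ψ_s x) w(ψ_s x)` of `v(ψ_s x)` into
`Dw(ψ_s x) v(ψ_s x)`. Hence `k ≡ 0`.

The flow is only assumed differentiable in space at each fixed time, so the derivative of
`t ↦ Dψ_t(y)` at `t = 0` is computed by hand: near `y` and for small `δ ≥ 0` the trajectories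
stay in a ball on which `w` is close to its linearisation `Dw(y)`, and a Grönwall estimate then
shows that `ψ_δ - id - δ w` has Lipschitz constant `o(δ)` near `y`.
-/

open Set Filter Metric Topology
open scoped NNReal

variable {E : Type*} [NormedAddCommGroup E] [NormedSpace ℝ E] {w : E → E} {ψ : ℝ → E → E}

theorem dist_le_of_norm_deriv_lt_on_closedBall {f f' : ℝ → E} {c : E} {a b R M : ℝ}
    (hf : ∀ t, HasDerivAt f (f' t) t) (hM : 0 ≤ M)
    (hbound : ∀ t, f t ∈ closedBall c R → ‖f' t‖ < M) (hR : dist (f a) c + M * (b - a) ≤ R) :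
    ∀ t ∈ Icc a b, dist (f t) c ≤ dist (f a) c + M * (t - a) := by
  simp only [mem_closedBall, dist_eq_norm] at hbound hR ⊢
  -- the speed bound is only needed where the linear bound is attained, and there `f t` is
  -- still in the ball
  refine image_norm_le_of_norm_deriv_right_lt_deriv_boundary' (f := fun t => f t - c)
    (fun t _ => ((hf t).continuousAt.sub continuousAt_const).continuousWithinAt)
    (fun t _ => ((hf t).sub_const c).hasDerivWithinAt) (by simp) (by fun_prop)
    (fun t _ => (((hasDerivAt_id t).sub_const a).const_mul M).const_add _ |>.hasDerivWithinAt
      |>.congr_deriv (mul_one M)) fun t ht heq => hbound t ?_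
  rw [heq]
  nlinarith [ht.2]

theorem exists_flow_mapsTo_closedBall (hψ0 : ∀ x, ψ 0 x = x)
    (hψflow : ∀ x t, HasDerivAt (fun s => ψ s x) (w (ψ t x)) t) {y : E} (hw : ContinuousAt w y)
    {r : ℝ} (hr : 0 < r) :
    ∃ T > 0, ∃ ρ > 0, ∀ τ ∈ Icc 0 T, ∀ z ∈ closedBall y ρ, ψ τ z ∈ closedBall y r := by
  obtain ⟨r₀, hr₀, hw₀⟩ := Metric.continuousAt_iff.1 hw 1 one_pos
  set R := min r (r₀ / 2)
  have hR : 0 < R := by positivity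
  set M := ‖w y‖ + 1
  have hM : 0 < M := by positivity
  refine ⟨R / (2 * M), by positivity, R / 2, by positivity, fun τ hτ z hz => ?_⟩
  have hbound : ∀ t, ψ t z ∈ closedBall y R → ‖w (ψ t z)‖ < M := fun t ht => by
    have := hw₀ ((mem_closedBall.1 ht).trans_lt (by linarith [min_le_right r (r₀ / 2)]))
    rw [dist_eq_norm] at this
    linarith [norm_le_norm_add_norm_sub' (w (ψ t z)) (w y)]
  have hstart : dist (ψ 0 z) y + M * (R / (2 * M) - 0) ≤ R := by
    rw [hψ0]
    field_simp
    linarith [mem_closedBall.1 hz]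
  have := dist_le_of_norm_deriv_lt_on_closedBall (hψflow z) hM.le hbound hstart τ hτ
  refine mem_closedBall.2 (this.trans ?_)
  nlinarith [hτ.2, min_le_left r (r₀ / 2), hstart]

theorem LipschitzOnWith.norm_flow_sub_le
    (hψ0 : ∀ x, ψ 0 x = x) (hψflow : ∀ x t, HasDerivAt (fun s => ψ s x) (w (ψ t x)) t)
    {s : Set E} {K : ℝ≥0} (hw : LipschitzOnWith K w s) {y z : E} {δ : ℝ}
    (hy : ∀ τ ∈ Icc 0 δ, ψ τ y ∈ s) (hz : ∀ τ ∈ Icc 0 δ, ψ τ z ∈ s) :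
    ∀ τ ∈ Icc 0 δ, ‖ψ τ z - ψ τ y‖ ≤ Real.exp (K * δ) * ‖z - y‖ := by
  intro τ hτ
  have hcont : ∀ x, ContinuousOn (fun t => ψ t x) (Icc 0 δ) := fun x =>
    (continuous_iff_continuousAt.2 fun t => (hψflow x t).continuousAt).continuousOn
  have := dist_le_of_trajectories_ODE_of_mem (v := fun _ => w) (s := fun _ => s)
    (fun _ _ => hw) (hcont z) (fun t _ => (hψflow z t).hasDerivWithinAt)
    (fun t ht => hz t (Ico_subset_Icc_self ht)) (hcont y)
    (fun t _ => (hψflow y t).hasDerivWithinAt)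
    (fun t ht => hy t (Ico_subset_Icc_self ht)) le_rfl τ hτ
  rw [hψ0, hψ0, dist_eq_norm, dist_eq_norm, sub_zero, mul_comm] at this
  exact this.trans (mul_le_mul_of_nonneg_right (Real.exp_le_exp.2 (by gcongr; exact hτ.2))
    (norm_nonneg _))

theorem ApproximatesLinearOn.norm_flow_remainder_sub_le
    (hψ0 : ∀ x, ψ 0 x = x) (hψflow : ∀ x t, HasDerivAt (fun s => ψ s x) (w (ψ t x)) t)
    {Λ : E →L[ℝ] E} {s : Set E} {c : ℝ≥0} (hw : ApproximatesLinearOn w Λ s c) {y z : E} {δ : ℝ}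
    (hδ : 0 ≤ δ) (hy : ∀ τ ∈ Icc 0 δ, ψ τ y ∈ s) (hz : ∀ τ ∈ Icc 0 δ, ψ τ z ∈ s) :
    ‖(ψ δ z - z - δ • w z) - (ψ δ y - y - δ • w y)‖ ≤
      (c * (Real.exp ((‖Λ‖ + c) * δ) + 1) +
        ‖Λ‖ * (‖Λ‖ + c) * Real.exp ((‖Λ‖ + c) * δ) * δ) * δ * ‖z - y‖ := by
  set L : ℝ := ‖Λ‖ + c
  set K := Real.exp (L * δ)
  have hlip : LipschitzOnWith (‖Λ‖₊ + c) w s := lipschitzOnWith_iff_restrict.2 hw.lipschitz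
  have hsep : ∀ τ ∈ Icc 0 δ, ‖ψ τ z - ψ τ y‖ ≤ K * ‖z - y‖ := by
    simpa [L] using hlip.norm_flow_sub_le hψ0 hψflow hy hz
  have hdiff : ∀ τ, HasDerivAt (fun τ => ψ τ z - ψ τ y - (z - y))
      (w (ψ τ z) - w (ψ τ y)) τ := fun τ => ((hψflow z τ).sub (hψflow y τ)).sub_const _
  have hdrift : ∀ τ ∈ Icc 0 δ, ‖ψ τ z - ψ τ y - (z - y)‖ ≤ L * K * ‖z - y‖ * τ := by
    intro τ hτ
    have := norm_image_sub_le_of_norm_deriv_le_segment' (C := L * K * ‖z - y‖)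
      (fun τ _ => (hdiff τ).hasDerivWithinAt) (fun σ hσ => ?_) τ hτ
    · simpa [hψ0] using this
    · have hσ' := Ico_subset_Icc_self hσ
      calc ‖w (ψ σ z) - w (ψ σ y)‖ ≤ L * ‖ψ σ z - ψ σ y‖ := by
            simpa using hlip.norm_sub_le (hz σ hσ') (hy σ hσ')
        _ ≤ L * (K * ‖z - y‖) := by gcongr; exact hsep σ hσ'
        _ = L * K * ‖z - y‖ := by ring
  have := norm_image_sub_le_of_norm_deriv_le_segment'
    (f := fun τ => ψ τ z - ψ τ y - (z - y) - τ • (w z - w y))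
    (C := (c * (K + 1) + ‖Λ‖ * L * K * δ) * ‖z - y‖)
    (fun τ _ => ((hdiff τ).sub ((hasDerivAt_id τ).smul_const (w z - w y))).hasDerivWithinAt)
    (fun σ hσ => ?_) δ ⟨hδ, le_rfl⟩
  · simp only [hψ0, sub_self, zero_smul, sub_zero] at this
    calc _ = ‖ψ δ z - ψ δ y - (z - y) - δ • (w z - w y)‖ := by rw [smul_sub]; abel_nf
      _ ≤ _ := this
      _ = _ := by ring
  · have hσ' := Ico_subset_Icc_self hσ
    have hsplit : w (ψ σ z) - w (ψ σ y) - (w z - w y) =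
        (w (ψ σ z) - w (ψ σ y) - Λ (ψ σ z - ψ σ y)) + Λ (ψ σ z - ψ σ y - (z - y)) -
          (w z - w y - Λ (z - y)) := by
      simp only [map_sub]; abel
    have hremσ := hw _ (hz σ hσ') _ (hy σ hσ')
    have hremσ' : (c : ℝ) * ‖ψ σ z - ψ σ y‖ ≤ c * (K * ‖z - y‖) := by
      gcongr; exact hsep σ hσ'
    have hrem₀ := hw _ (hz 0 ⟨le_rfl, hδ⟩) _ (hy 0 ⟨le_rfl, hδ⟩)
    rw [hψ0, hψ0] at hrem₀
    have hΛdrift : ‖Λ (ψ σ z - ψ σ y - (z - y))‖ ≤ ‖Λ‖ * (L * K * ‖z - y‖ * δ) :=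
      Λ.le_opNorm_of_le ((hdrift σ hσ').trans (by gcongr; exact hσ.2.le))
    rw [one_smul, hsplit]
    refine (norm_sub_le _ _).trans ((add_le_add_left (norm_add_le _ _) _).trans ?_)
    nlinarith

theorem hasDerivWithinAt_fderiv_flow_Ici
    (hψ0 : ∀ x, ψ 0 x = x) (hψflow : ∀ x t, HasDerivAt (fun s => ψ s x) (w (ψ t x)) t)
    {Λ : E →L[ℝ] E} {y : E} (hw : HasStrictFDerivAt w Λ y)
    (hψd : ∀ t, DifferentiableAt ℝ (ψ t) y) :
    HasDerivWithinAt (fun t => fderiv ℝ (ψ t) y) Λ (Ici 0) 0 := by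
  rw [hasDerivWithinAt_iff_isLittleO, Asymptotics.isLittleO_iff]
  intro ε hε
  -- the coefficient of `norm_flow_remainder_sub_le`, which tends to `0` with `(c, δ)`
  set coeff : ℝ → ℝ → ℝ := fun c δ => c * (Real.exp ((‖Λ‖ + c) * δ) + 1) +
    ‖Λ‖ * (‖Λ‖ + c) * Real.exp ((‖Λ‖ + c) * δ) * δ
  have hcoeff : ∀ᶠ p : ℝ × ℝ in 𝓝 (0, 0), coeff p.1 p.2 < ε := by
    have : Continuous fun p : ℝ × ℝ => coeff p.1 p.2 := by fun_prop
    exact this.continuousAt.eventually_lt continuousAt_const (by simpa [coeff] using hε)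
  rw [nhds_prod_eq] at hcoeff
  obtain ⟨c, hc, hcδ⟩ : ∃ c : ℝ, 0 < c ∧ ∀ᶠ δ in 𝓝 0, coeff c δ < ε :=
    ((hcoeff.curry.filter_mono (nhdsWithin_le_nhds (s := Ioi 0))).and
      self_mem_nhdsWithin).exists.imp fun _ h => ⟨h.2, h.1⟩
  obtain ⟨s, hs, happrox⟩ := hw.approximates_deriv_on_nhds (c := c.toNNReal)
    (Or.inr (Real.toNNReal_pos.2 hc))
  obtain ⟨r, hr, hrs⟩ := nhds_basis_closedBall.mem_iff.1 hs
  obtain ⟨T, hT, ρ, hρ, hconf⟩ := exists_flow_mapsTo_closedBall hψ0 hψflow hw.continuousAt hr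
  filter_upwards [Icc_mem_nhdsGE hT, hcδ.filter_mono nhdsWithin_le_nhds] with δ hδ hδε
  have hlip : ∀ᶠ z in 𝓝 y, ‖(ψ δ z - z - δ • w z) - (ψ δ y - y - δ • w y)‖ ≤
      ε * δ * ‖z - y‖ := by
    filter_upwards [closedBall_mem_nhds y hρ] with z hz
    have hmaps : ∀ x ∈ closedBall y ρ, ∀ τ ∈ Icc 0 δ, ψ τ x ∈ closedBall y r :=
      fun x hx τ hτ => hconf τ ⟨hτ.1, hτ.2.trans hδ.2⟩ x hx
    refine ((happrox.mono_set hrs).norm_flow_remainder_sub_le hψ0 hψflow hδ.1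
      (hmaps y (mem_closedBall_self hρ.le)) (hmaps z hz)).trans ?_
    rw [Real.coe_toNNReal _ hc.le]
    gcongr
    exact hδ.1
  have hderiv : HasFDerivAt (fun z => ψ δ z - z - δ • w z)
      (fderiv ℝ (ψ δ) y - ContinuousLinearMap.id ℝ E - δ • Λ) y :=
    ((hψd δ).hasFDerivAt.sub (hasFDerivAt_id y)).sub (hw.hasFDerivAt.const_smul δ)
  have hψ0' : ψ 0 = id := funext hψ0
  rw [hψ0', fderiv_id, sub_zero, Real.norm_of_nonneg hδ.1]
  exact hderiv.le_of_lip' (by nlinarith [hδ.1]) hlip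

theorem hasDerivAt_fderiv_flow_zero
    (hψ0 : ∀ x, ψ 0 x = x) (hψflow : ∀ x t, HasDerivAt (fun s => ψ s x) (w (ψ t x)) t)
    {Λ : E →L[ℝ] E} {y : E} (hw : HasStrictFDerivAt w Λ y)
    (hψd : ∀ t, DifferentiableAt ℝ (ψ t) y) :
    HasDerivAt (fun t => fderiv ℝ (ψ t) y) Λ 0 := by
  have hright := hasDerivWithinAt_fderiv_flow_Ici hψ0 hψflow hw hψd
  have hreversed := hasDerivWithinAt_fderiv_flow_Ici (w := -w) (ψ := fun t => ψ (-t))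
    (by simpa using hψ0)
    (fun x t => by
      simpa [Function.comp_def] using (hψflow x (-t)).scomp t (hasDerivAt_neg t)) hw.neg
    (fun t => hψd (-t))
  have hleft : HasDerivWithinAt (fun t => fderiv ℝ (ψ t) y) Λ (Iic 0) 0 := by
    rw [← neg_zero] at hreversed
    have := hreversed.scomp (0 : ℝ) ((hasDerivAt_neg 0).hasDerivWithinAt (s := Iic 0))
      fun t ht => by simpa using ht
    rw [neg_one_smul, neg_neg] at this
    exact this.congr (fun t _ => by simp) (by simp)
  have := hleft.union hright
  rwa [Iic_union_Ici, hasDerivWithinAt_univ] at this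

theorem hasDerivAt_fderiv_flow (hw : ContDiff ℝ 1 w)
    (hψ0 : ∀ x, ψ 0 x = x) (hψadd : ∀ s t x, ψ (s + t) x = ψ s (ψ t x))
    (hψflow : ∀ x t, HasDerivAt (fun s => ψ s x) (w (ψ t x)) t)
    (hψd : ∀ t, Differentiable ℝ (ψ t)) (x : E) (s : ℝ) :
    HasDerivAt (fun t => fderiv ℝ (ψ t) x) ((fderiv ℝ w (ψ s x)).comp (fderiv ℝ (ψ s) x)) s := by
  have hsplit : ∀ t, fderiv ℝ (ψ t) x = (fderiv ℝ (ψ (t - s)) (ψ s x)).comp (fderiv ℝ (ψ s) x) :=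
    fun t => by
      rw [← fderiv_comp x (hψd _ _) (hψd _ _)]
      congr 1
      funext z
      rw [Function.comp_apply, ← hψadd, sub_add_cancel]
  have hzero := hasDerivAt_fderiv_flow_zero hψ0 hψflow
    (hw.contDiffAt.hasStrictFDerivAt one_ne_zero) fun t => hψd t (ψ s x)
  rw [← sub_self s] at hzero
  have hcomp := (hzero.comp_sub_const s s).clm_comp (hasDerivAt_const s (fderiv ℝ (ψ s) x))
  rw [ContinuousLinearMap.comp_zero, add_zero] at hcomp
  exact hcomp.congr_of_eventuallyEq (Eventually.of_forall hsplit)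

theorem eq_zero_of_hasDerivAt_clm_apply {k : ℝ → E} {A : ℝ → E →L[ℝ] E} (hA : Continuous A)
    (hk : ∀ t, HasDerivAt k (A t (k t)) t) {t₀ : ℝ} (hk₀ : k t₀ = 0) (t : ℝ) : k t = 0 := by
  set a := min t t₀ - 1
  set b := max t t₀ + 1
  have hta : a < t := by linarith [min_le_left t t₀]
  have ht₀a : a < t₀ := by linarith [min_le_right t t₀]
  have htb : t < b := by linarith [le_max_left t t₀]
  have ht₀b : t₀ < b := by linarith [le_max_right t t₀]
  obtain ⟨C, hC⟩ := isCompact_Icc.exists_bound_of_continuousOn (hA.continuousOn (s := Icc a b))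
  have hlip : ∀ τ ∈ Ioo a b, LipschitzOnWith C.toNNReal (A τ) univ := fun τ hτ =>
    ((A τ).lipschitz.weaken (by
      rw [← NNReal.coe_le_coe, coe_nnnorm, Real.coe_toNNReal']
      exact (hC τ (Ioo_subset_Icc_self hτ)).trans (le_max_left _ _))).lipschitzOnWith
  have hcont : ContinuousOn k (Icc a b) :=
    (continuous_iff_continuousAt.2 fun τ => (hk τ).continuousAt).continuousOn
  refine ODE_solution_unique_of_mem_Icc (v := fun τ => A τ) (g := 0) hlip
    ⟨ht₀a, ht₀b⟩ hcont (fun τ _ => hk τ) (fun _ _ => mem_univ _)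
    continuousOn_const (fun τ _ => by simp)
    (fun _ _ => mem_univ _) hk₀ ⟨hta.le, htb.le⟩

theorem fderiv_flow_apply_eq_of_lieBracket_eq_zero {v : E → E} (hv : Differentiable ℝ v)
    (hw : ContDiff ℝ 1 w) (hbracket : ∀ x, VectorField.lieBracket ℝ v w x = 0)
    (hψ0 : ∀ x, ψ 0 x = x) (hψadd : ∀ s t x, ψ (s + t) x = ψ s (ψ t x))
    (hψflow : ∀ x t, HasDerivAt (fun s => ψ s x) (w (ψ t x)) t)
    (hψd : ∀ t, Differentiable ℝ (ψ t)) (t : ℝ) (x : E) :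
    fderiv ℝ (ψ t) x (v x) = v (ψ t x) := by
  set k : ℝ → E := fun s => fderiv ℝ (ψ s) x (v x) - v (ψ s x)
  have hk : ∀ s, HasDerivAt k (fderiv ℝ w (ψ s x) (k s)) s := fun s => by
    have hpush := (hasDerivAt_fderiv_flow hw hψ0 hψadd hψflow hψd x s).clm_apply
      (hasDerivAt_const s (v x))
    have hv' := (hv (ψ s x)).hasFDerivAt.comp_hasDerivAt s (hψflow x s)
    have hcomm : fderiv ℝ v (ψ s x) (w (ψ s x)) = fderiv ℝ w (ψ s x) (v (ψ s x)) :=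
      (sub_eq_zero.1 (hbracket (ψ s x))).symm
    exact (hpush.sub hv').congr_deriv (by simp [k, hcomm])
  have hk₀ : k 0 = 0 := by
    simp [k, show ψ 0 = id from funext hψ0]
  exact sub_eq_zero.1 (eq_zero_of_hasDerivAt_clm_apply
    ((hw.continuous_fderiv one_ne_zero).comp (continuous_iff_continuousAt.2 fun s =>
      (hψflow x s).continuousAt)) hk hk₀ t)

theorem comp_flow_eq_of_fderiv_apply_eq_zero {F : Type*} [NormedAddCommGroup F]
    [NormedSpace ℝ F] {π : E → F} (hπ : Differentiable ℝ π)
    (hinv : ∀ x, fderiv ℝ π x (w x) = 0) (hψ0 : ∀ x, ψ 0 x = x)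
    (hψflow : ∀ x t, HasDerivAt (fun s => ψ s x) (w (ψ t x)) t) (t : ℝ) (x : E) :
    π (ψ t x) = π x := by
  have hconst : ∀ s, HasDerivAt (fun s => π (ψ s x)) 0 s := fun s => by
    simpa [hinv, Function.comp_def] using
      (hπ (ψ s x)).hasFDerivAt.comp_hasDerivAt s (hψflow x s)
  simpa [hψ0] using is_const_of_deriv_eq_zero (fun s => (hconst s).differentiableAt)
    (fun s => (hconst s).deriv) t 0

/-- If `[v, w] = 0` and `π` is invariant under `w` (`Dπ(x)(w(x)) = 0`),
then the projected velocity `Dπ(x)(v(x))` is constant along the orbits of `w`. -/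
theorem projected_velocity_constant_on_orbits
    {m n : ℕ} (v w : (Fin m → ℝ) → (Fin m → ℝ))
    (hv : ContDiff ℝ 1 v) (hw : ContDiff ℝ 1 w)
    (hbracket : ∀ x : Fin m → ℝ, fderiv ℝ w x (v x) - fderiv ℝ v x (w x) = 0)
    (ψ : ℝ → (Fin m → ℝ) → (Fin m → ℝ))
    (hψ0 : ∀ x, ψ 0 x = x)
    (hψadd : ∀ s t x, ψ (s + t) x = ψ s (ψ t x))
    (hψflow : ∀ x t, HasDerivAt (fun s => ψ s x) (w (ψ t x)) t)
    (hψsmooth : ∀ ε : ℝ, ContDiff ℝ 1 (ψ ε))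
    (π : (Fin m → ℝ) → (Fin n → ℝ)) (hπ : Differentiable ℝ π)
    (hinv : ∀ x : Fin m → ℝ, fderiv ℝ π x (w x) = 0) :
    ∀ (ε : ℝ) (x : Fin m → ℝ),
      fderiv ℝ π (ψ ε x) (v (ψ ε x)) = fderiv ℝ π x (v x) := by
  intro ε x
  have hψd : ∀ t, Differentiable ℝ (ψ t) := fun t => (hψsmooth t).differentiable one_ne_zero
  have hpush := fderiv_flow_apply_eq_of_lieBracket_eq_zero (hv.differentiable one_ne_zero) hw
    hbracket hψ0 hψadd hψflow hψd ε x
  have hπψ : π ∘ ψ ε = π := funext (comp_flow_eq_of_fderiv_apply_eq_zero hπ hinv hψ0 hψflow ε)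
  calc fderiv ℝ π (ψ ε x) (v (ψ ε x))
      = fderiv ℝ π (ψ ε x) (fderiv ℝ (ψ ε) x (v x)) := by rw [hpush]
    _ = fderiv ℝ (π ∘ ψ ε) x (v x) := by rw [fderiv_comp x (hπ _) (hψd ε x)]; rfl
    _ = fderiv ℝ π x (v x) := by rw [hπψ]
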